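/- arXiv:2306.17781 — 4 statements merged into one kernel-verified Lean document; each statement's English description precedes it below -/
import Mathlib

section
/- For every real number α > 1, lim_{m→∞} σ_α(m!)/(m!)^α = ζ(α). -/
open Filter Topology

noncomputable def sigmaR (α : ℝ) (m : ℕ) : ℝ := ∑ d ∈ m.divisors, (d : ℝ) ^ α

noncomputable def zetaR (α : ℝ) : ℝ := ∑' k : ℕ, ((k : ℝ) + 1) ^ (-α)

/-!
Pairing each divisor `d` of `n` with `n / d` gives `σ_α(n) / n^α = ∑_{d ∣ n} d^(-α)`. Every
`k ≤ m` divides `m!`, so the divisor sets of `m!` exhaust `ℕ \ {0}` monotonically, and these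
partial sums of the convergent series `∑ d^(-α)` tend to `ζ(α)`.
-/

theorem sigmaR_div_rpow_self (α : ℝ) {n : ℕ} (hn : n ≠ 0) :
    sigmaR α n / (n : ℝ) ^ α = ∑ d ∈ n.divisors, (d : ℝ) ^ (-α) := by
  rw [sigmaR, ← Nat.sum_div_divisors, Finset.sum_div]
  refine Finset.sum_congr rfl fun d hd => ?_
  obtain ⟨k, rfl⟩ := Nat.dvd_of_mem_divisors hd
  have hd0 : (0 : ℝ) < d := by exact_mod_cast Nat.pos_of_mem_divisors hd
  have hk0 : (0 : ℝ) < k := by exact_mod_cast Nat.pos_of_ne_zero (right_ne_zero_of_mul hn)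
  rw [Nat.mul_div_cancel_left _ (by exact_mod_cast hd0), Nat.cast_mul,
    Real.mul_rpow hd0.le hk0.le, Real.rpow_neg hd0.le,
    div_mul_cancel_right₀ (Real.rpow_pos_of_pos hk0 α).ne']

theorem tendsto_insert_zero_divisors_factorial :
    Tendsto (fun m : ℕ => insert 0 m.factorial.divisors) atTop atTop := by
  refine tendsto_atTop_finset_of_monotone (fun m m' hmm' => ?_) fun d => ⟨d, ?_⟩
  · exact Finset.insert_subset_insert _
      (Nat.divisors_subset_of_dvd (Nat.factorial_ne_zero _) (Nat.factorial_dvd_factorial hmm'))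
  · rcases d.eq_zero_or_pos with rfl | hd
    · exact Finset.mem_insert_self _ _
    · exact Finset.mem_insert_of_mem
        (Nat.mem_divisors.mpr ⟨Nat.dvd_factorial hd le_rfl, Nat.factorial_ne_zero _⟩)

theorem HasSum.tendsto_sum_divisors_factorial {E : Type*} [AddCommMonoid E] [TopologicalSpace E]
    {f : ℕ → E} {a : E} (hf : HasSum f a) (hf0 : f 0 = 0) :
    Tendsto (fun m : ℕ => ∑ d ∈ m.factorial.divisors, f d) atTop (𝓝 a) :=
  (hf.comp tendsto_insert_zero_divisors_factorial).congr fun _ => Finset.sum_insert_zero hf0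

theorem hasSum_zetaR {α : ℝ} (hα : 1 < α) :
    HasSum (fun n : ℕ => (n : ℝ) ^ (-α)) (zetaR α) := by
  have hsum : Summable (fun n : ℕ => (n : ℝ) ^ (-α)) := Real.summable_nat_rpow.mpr (by linarith)
  have hshift := (hasSum_nat_add_iff (f := fun n : ℕ => (n : ℝ) ^ (-α)) 1).mp
    ((summable_nat_add_iff 1).mpr hsum).hasSum
  simpa [Real.zero_rpow (by linarith : -α ≠ 0), zetaR] using hshift

theorem stmt_1 (α : ℝ) (hα : 1 < α) :
    Tendsto (fun m : ℕ => sigmaR α (m.factorial) / ((m.factorial : ℝ)) ^ α)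
      atTop (𝓝 (zetaR α)) := by
  have hzero : ((0 : ℕ) : ℝ) ^ (-α) = 0 := by
    rw [Nat.cast_zero, Real.zero_rpow (by linarith)]
  exact ((hasSum_zetaR hα).tendsto_sum_divisors_factorial hzero).congr fun m =>
    (sigmaR_div_rpow_self α m.factorial_ne_zero).symm
end

section
/- Let φ_n(x) = √(nπ) cos^{2n}(πx). If f ∈ L¹[0,1] is continuous at 0 and at 1, then lim_{n→∞} ∫_0^1 f(x) φ_n(x) dx = (f(0) + f(1))/2. -/
open Filter Topology Real MeasureTheory

/-!
The kernel `cos (π x) ^ (2n)` is invariant under `x ↦ 1 - x` and peaks at `0` and `1`. Folding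
`[0, 1]` at `1/2` turns the integral into one over `[0, 1/2]` against `f x + f (1 - x)`, whose only
peak is at `0`, so by the peak-function principle the normalized integrals tend to `f 0 + f 1`.
The normalizing constant is `∫₀^{1/2} cos (π x) ^ (2n) = (2n-1)!! / (2 · (2n)!!)`, which is
`~ 1 / (2 √(n π))` by Wallis' product.
-/

/-- `(2n-1)!! / (2n)!!`. -/
noncomputable def doubleFactorialRatio (n : ℕ) : ℝ :=
  ∏ i ∈ Finset.range n, (2 * (i : ℝ) + 1) / (2 * i + 2)

lemma doubleFactorialRatio_pos (n : ℕ) : 0 < doubleFactorialRatio n :=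
  Finset.prod_pos fun _ _ => by positivity

lemma sq_doubleFactorialRatio_mul_W (n : ℕ) :
    doubleFactorialRatio n ^ 2 * (2 * n + 1) * Wallis.W n = 1 := by
  induction n with
  | zero => simp [doubleFactorialRatio, Wallis.W]
  | succ k ih =>
    rw [Wallis.W_succ, doubleFactorialRatio, Finset.prod_range_succ, ← doubleFactorialRatio]
    push_cast
    field_simp
    linear_combination (2 * (k : ℝ) + 3) * ih

lemma tendsto_sqrt_mul_doubleFactorialRatio :
    Tendsto (fun n : ℕ => √(n * π) * doubleFactorialRatio n) atTop (𝓝 1) := by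
  have hsq : Tendsto (fun n : ℕ => n * π * doubleFactorialRatio n ^ 2) atTop (𝓝 1) := by
    -- `n π (doubleFactorialRatio n)² = (π / 2) · (n / (n + 1/2)) · (W n)⁻¹`
    have := ((tendsto_natCast_div_add_atTop (1 / 2 : ℝ)).mul
      (Wallis.tendsto_W_nhds_pi_div_two.inv₀ (by positivity))).const_mul (π / 2)
    rw [one_mul, mul_inv_cancel₀ (by positivity)] at this
    refine this.congr fun n => ?_
    rw [eq_inv_of_mul_eq_one_left ((mul_assoc _ _ _).symm.trans (sq_doubleFactorialRatio_mul_W n))]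
    field_simp
  have hsqrt := (continuous_sqrt.tendsto 1).comp hsq
  rw [sqrt_one] at hsqrt
  refine hsqrt.congr fun n => ?_
  rw [Function.comp_apply, sqrt_mul (by positivity),
    sqrt_sq (doubleFactorialRatio_pos n).le]

lemma integral_cos_pi_mul_pow_even (n : ℕ) :
    ∫ x in (0 : ℝ)..1, cos (π * x) ^ (2 * n) = doubleFactorialRatio n := by
  have hper : Function.Periodic (fun x => sin x ^ (2 * n)) π := fun x => by
    simp [sin_add_pi, (even_two_mul n).neg_pow]
  have hshift := intervalIntegral.integral_comp_add_right (fun x => sin x ^ (2 * n))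
    (a := 0) (b := π) (π / 2)
  simp only [sin_add_pi_div_two, zero_add] at hshift
  rw [intervalIntegral.integral_comp_mul_left (fun x => cos x ^ (2 * n)) pi_ne_zero, mul_zero,
    mul_one, hshift, add_comm π, hper.intervalIntegral_add_eq (π / 2) 0, zero_add,
    integral_sin_pow_even, smul_eq_mul, inv_mul_cancel_left₀ pi_ne_zero, doubleFactorialRatio]

lemma cos_pi_mul_one_sub_pow_even (n : ℕ) (x : ℝ) :
    cos (π * (1 - x)) ^ (2 * n) = cos (π * x) ^ (2 * n) := by
  rw [mul_one_sub, cos_pi_sub, (even_two_mul n).neg_pow]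

lemma add_div_two_mem_uIcc (a b : ℝ) : (a + b) / 2 ∈ Set.uIcc a b := by
  rcases le_total a b with h | h
  · exact Set.mem_uIcc.2 (Or.inl ⟨by linarith, by linarith⟩)
  · exact Set.mem_uIcc.2 (Or.inr ⟨by linarith, by linarith⟩)

section Reflection

variable {E : Type*} [NormedAddCommGroup E] {F : ℝ → E} {a b : ℝ}

lemma IntervalIntegrable.comp_sub_left_half (hF : IntervalIntegrable F volume a b) :
    IntervalIntegrable (fun x => F (a + b - x)) volume a ((a + b) / 2) := by
  have hright := hF.mono_set (Set.uIcc_subset_uIcc (add_div_two_mem_uIcc a b) Set.right_mem_uIcc)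
  simpa [show a + b - (a + b) / 2 = (a + b) / 2 by ring] using
    (hright.comp_sub_left (a + b)).symm

lemma intervalIntegral.integral_eq_integral_half_add_comp_sub_left [NormedSpace ℝ E]
    (hF : IntervalIntegrable F volume a b) :
    ∫ x in a..b, F x = ∫ x in a..(a + b) / 2, (F x + F (a + b - x)) := by
  have hleft := hF.mono_set (Set.uIcc_subset_uIcc Set.left_mem_uIcc (add_div_two_mem_uIcc a b))
  have hright := hF.mono_set (Set.uIcc_subset_uIcc (add_div_two_mem_uIcc a b) Set.right_mem_uIcc)
  rw [intervalIntegral.integral_add hleft hF.comp_sub_left_half,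
    intervalIntegral.integral_comp_sub_left, add_sub_cancel_left,
    show a + b - (a + b) / 2 = (a + b) / 2 by ring,
    intervalIntegral.integral_add_adjacent_intervals hleft hright]

end Reflection

lemma integral_cos_pi_mul_pow_even_smul_eq_integral_half {E : Type*} [NormedAddCommGroup E]
    [NormedSpace ℝ E] {f : ℝ → E} (hf : IntervalIntegrable f volume 0 1) (n : ℕ) :
    ∫ x in (0 : ℝ)..1, cos (π * x) ^ (2 * n) • f x =
      ∫ x in (0 : ℝ)..1 / 2, cos (π * x) ^ (2 * n) • (f x + f (1 - x)) := by
  rw [intervalIntegral.integral_eq_integral_half_add_comp_sub_left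
    (hf.continuousOn_smul (by fun_prop : Continuous _).continuousOn), zero_add]
  simp only [cos_pi_mul_one_sub_pow_even, smul_add]

lemma integral_cos_pi_mul_pow_even_half (n : ℕ) :
    ∫ x in (0 : ℝ)..1 / 2, cos (π * x) ^ (2 * n) = doubleFactorialRatio n / 2 := by
  have := integral_cos_pi_mul_pow_even_smul_eq_integral_half (f := fun _ => (1 : ℝ))
    intervalIntegrable_const n
  simp only [smul_eq_mul, mul_one, integral_cos_pi_mul_pow_even,
    intervalIntegral.integral_mul_const] at this
  linarith

lemma tendsto_inv_integral_cos_pi_mul_pow_even_smul {E : Type*} [NormedAddCommGroup E]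
    [NormedSpace ℝ E] [CompleteSpace E] {g : ℝ → E} (hg : IntegrableOn g (Set.Icc 0 (1 / 2)))
    (hg0 : ContinuousWithinAt g (Set.Icc 0 (1 / 2)) 0) :
    Tendsto (fun n : ℕ => (∫ x in (0 : ℝ)..1 / 2, cos (π * x) ^ (2 * n))⁻¹ •
        ∫ x in (0 : ℝ)..1 / 2, cos (π * x) ^ (2 * n) • g x) atTop (𝓝 (g 0)) := by
  have hmax : ∀ y ∈ Set.Icc (0 : ℝ) (1 / 2), y ≠ 0 → cos (π * y) ^ 2 < cos (π * 0) ^ 2 := by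
    rintro y ⟨hy0, hy⟩ hy0'
    have : 0 < sin (π * y) :=
      sin_pos_of_pos_of_lt_pi (mul_pos pi_pos (hy0.lt_of_ne' hy0')) (by nlinarith [pi_pos])
    rw [mul_zero, cos_zero, cos_sq']
    nlinarith
  have := tendsto_setIntegral_pow_smul_of_unique_maximum_of_isCompact_of_integrableOn
    (μ := volume) isCompact_Icc (by fun_prop) hmax (fun x _ => sq_nonneg _) (by simp)
    (by rw [closure_interior_Icc (by norm_num)]; norm_num) hg hg0
  simpa only [intervalIntegral.integral_of_le (by norm_num : (0 : ℝ) ≤ 1 / 2),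
    integral_Icc_eq_integral_Ioc, pow_mul] using this

theorem stmt_6 (f : ℝ → ℝ) (hf : IntegrableOn f (Set.Icc 0 1))
    (hcont0 : ContinuousAt f 0) (hcont1 : ContinuousAt f 1) :
    Tendsto (fun n : ℕ =>
        ∫ x in (0:ℝ)..1, f x * (Real.sqrt (n * π) * (Real.cos (π * x)) ^ (2 * n)))
      atTop (𝓝 ((f 0 + f 1) / 2)) := by
  have hfi : IntervalIntegrable f volume 0 1 :=
    (intervalIntegrable_iff_integrableOn_Icc_of_le zero_le_one).2 hf
  have hg : IntegrableOn (fun x => f x + f (1 - x)) (Set.Icc 0 (1 / 2)) := by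
    have := (hfi.mono_set (Set.uIcc_subset_uIcc_left (by norm_num))).add hfi.comp_sub_left_half
    simpa [intervalIntegrable_iff_integrableOn_Icc_of_le] using this
  have hg0 : ContinuousWithinAt (fun x => f x + f (1 - x)) (Set.Icc 0 (1 / 2)) 0 :=
    (hcont0.add (hcont1.comp_of_eq (by fun_prop) (by norm_num))).continuousWithinAt
  have hlim := (tendsto_sqrt_mul_doubleFactorialRatio.div_const 2).mul
    (tendsto_inv_integral_cos_pi_mul_pow_even_smul hg hg0)
  rw [sub_zero, div_mul_eq_mul_div, one_mul] at hlim
  refine hlim.congr fun n => ?_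
  rw [← integral_cos_pi_mul_pow_even_smul_eq_integral_half hfi n,
    integral_cos_pi_mul_pow_even_half]
  simp only [smul_eq_mul, mul_left_comm (f _), mul_comm (f _), intervalIntegral.integral_const_mul]
  field_simp [(doubleFactorialRatio_pos n).ne']
end

section
/- lim_{n→∞} √(nπ) ∫_{−1/2}^{1/2} cos^{2n}(πx) dx = 1. -/
/-!
Substituting `u = π x + π/2` turns the integral into `π⁻¹ ∫₀^π sin^(2n)`, i.e. into
`c n = ∏_{i<n} (2i+1)/(2i+2)`. Against the Wallis partial products `W n` this gives
`c n ^ 2 · (2n+1) · W n = 1`, so `(√(nπ) · c n)² = nπ / ((2n+1) W n)`, which tends to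
`π / (2 · π/2) = 1` by Wallis' formula `W n → π/2`.
-/

open Filter Topology Real Finset

theorem integral_cos_pi_mul_pow (k : ℕ) :
    ∫ x in (-(1:ℝ)/2)..(1/2), cos (π * x) ^ k = π⁻¹ * ∫ x in 0..π, sin x ^ k := by
  rw [intervalIntegral.integral_comp_mul_left (cos · ^ k) pi_ne_zero, smul_eq_mul]
  simp_rw [← cos_sub_pi_div_two]
  rw [intervalIntegral.integral_comp_sub_right (cos · ^ k)]
  ring_nf

theorem integral_cos_pi_mul_pow_two_mul (n : ℕ) :
    ∫ x in (-(1:ℝ)/2)..(1/2), cos (π * x) ^ (2 * n) =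
      ∏ i ∈ range n, (2 * (i:ℝ) + 1) / (2 * i + 2) := by
  rw [integral_cos_pi_mul_pow, integral_sin_pow_even, inv_mul_cancel_left₀ pi_ne_zero]

theorem Real.Wallis.prod_sq_mul_W (n : ℕ) :
    (∏ i ∈ range n, (2 * (i:ℝ) + 1) / (2 * i + 2)) ^ 2 * ((2 * n + 1) * W n) = 1 := by
  induction n with
  | zero => simp [W]
  | succ k ih =>
    refine Eq.trans ?_ ih
    rw [prod_range_succ, W_succ]
    push_cast
    field_simp
    ring

theorem Real.Wallis.tendsto_mul_pi_div_mul_W :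
    Tendsto (fun n : ℕ => n * π / ((2 * n + 1) * W n)) atTop (𝓝 1) := by
  have h := Stirling.tendsto_self_div_two_mul_self_add_one.mul
    ((tendsto_const_nhds (x := π)).div tendsto_W_nhds_pi_div_two (by positivity : π / 2 ≠ 0))
  rw [show (1 / 2 : ℝ) * (π / (π / 2)) = 1 by field_simp] at h
  simpa only [mul_div_mul_comm, Pi.div_apply] using h

theorem stmt_8 :
    Tendsto (fun n : ℕ =>
        Real.sqrt (n * π) * ∫ x in (-(1:ℝ)/2)..(1/2), (Real.cos (π * x)) ^ (2 * n))
      atTop (𝓝 1) := by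
  have h_eq (n : ℕ) : Real.sqrt (n * π) * ∫ x in (-(1:ℝ)/2)..(1/2), cos (π * x) ^ (2 * n)
      = Real.sqrt (n * π / ((2 * n + 1) * Wallis.W n)) := by
    rw [integral_cos_pi_mul_pow_two_mul, ← Real.sqrt_sq (prod_nonneg fun i _ => by positivity),
      ← Real.sqrt_mul (by positivity), eq_inv_of_mul_eq_one_left (Wallis.prod_sq_mul_W n),
      div_eq_mul_inv]
  simpa only [h_eq, Real.sqrt_one] using Wallis.tendsto_mul_pi_div_mul_W.sqrt
end

section
/- For every real α > 1, lim_{m→∞} ∑_{k=1}^m ((1/k − 1/(4·m!))^α − 1/k^α) = 0. -/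
/-! For `α ≥ 1` the map `x ↦ x ^ α` is `α`-Lipschitz on `[0, 1]`, so each of the `m` summands
has absolute value at most `α / (4 * m!)`; the sum is therefore at most `α * m / (4 * m!)`,
which tends to `0`. -/

open Filter Topology Set

theorem Real.abs_rpow_sub_rpow_le_of_mem_Icc {p : ℝ} (hp : 1 ≤ p) {x y : ℝ}
    (hx : x ∈ Icc (0 : ℝ) 1) (hy : y ∈ Icc (0 : ℝ) 1) : |y ^ p - x ^ p| ≤ p * |y - x| := by
  have hderiv (z : ℝ) : HasDerivAt (fun z : ℝ => z ^ p) (p * z ^ (p - 1)) z :=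
    Real.hasDerivAt_rpow_const (Or.inr hp)
  refine (convex_Icc 0 1).norm_image_sub_le_of_norm_deriv_le
    (fun z _ => (hderiv z).differentiableAt) (fun z hz => ?_) hx hy
  rw [(hderiv z).deriv, Real.norm_eq_abs, abs_of_nonneg (by have := hz.1; positivity)]
  exact mul_le_of_le_one_right (by linarith) (Real.rpow_le_one hz.1 hz.2 (by linarith))

theorem Real.abs_sub_rpow_sub_rpow_le {p ε x : ℝ} (hp : 1 ≤ p) (hε : 0 ≤ ε) (hεx : ε ≤ x)
    (hx : x ≤ 1) : |(x - ε) ^ p - x ^ p| ≤ p * ε := by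
  have h := Real.abs_rpow_sub_rpow_le_of_mem_Icc hp ⟨hε.trans hεx, hx⟩
    ⟨sub_nonneg.2 hεx, by linarith⟩
  rwa [sub_sub_cancel_left, abs_neg, abs_of_nonneg hε] at h

theorem tendsto_natCast_div_factorial_atTop :
    Tendsto (fun m : ℕ => (m : ℝ) / m.factorial) atTop (𝓝 0) := by
  refine squeeze_zero (fun m => by positivity) (fun m => ?_)
    (FloorSemiring.tendsto_pow_div_factorial_atTop (2 : ℝ))
  gcongr
  exact_mod_cast m.lt_two_pow_self.le

theorem stmt_16 (α : ℝ) (hα : 1 < α) :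
    Tendsto (fun m : ℕ =>
        ∑ k ∈ Finset.Icc 1 m,
          ((1 / (k : ℝ) - 1 / (4 * (m.factorial : ℝ))) ^ α - (1 / (k : ℝ)) ^ α))
      atTop (𝓝 0) := by
  have hterm (m k : ℕ) (hk : k ∈ Finset.Icc 1 m) :
      ‖(1 / (k : ℝ) - 1 / (4 * (m.factorial : ℝ))) ^ α - (1 / (k : ℝ)) ^ α‖
        ≤ α * (1 / (4 * (m.factorial : ℝ))) := by
    obtain ⟨hk1, hkm⟩ := Finset.mem_Icc.1 hk
    have hk : (1 : ℝ) ≤ k := by exact_mod_cast hk1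
    have hkfac : (k : ℝ) ≤ m.factorial := by exact_mod_cast hkm.trans m.self_le_factorial
    refine Real.abs_sub_rpow_sub_rpow_le hα.le (by positivity) ?_
      (by simpa using inv_le_one_of_one_le₀ hk)
    gcongr
    linarith
  have hbound (m : ℕ) : ‖∑ k ∈ Finset.Icc 1 m,
      ((1 / (k : ℝ) - 1 / (4 * (m.factorial : ℝ))) ^ α - (1 / (k : ℝ)) ^ α)‖
        ≤ α / 4 * ((m : ℝ) / m.factorial) := by
    refine (norm_sum_le _ _).trans ((Finset.sum_le_sum (hterm m)).trans (le_of_eq ?_))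
    rw [Finset.sum_const, Nat.card_Icc, nsmul_eq_mul, Nat.add_sub_cancel]
    field_simp
  refine squeeze_zero_norm hbound ?_
  simpa using tendsto_natCast_div_factorial_atTop.const_mul (α / 4)
end
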